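/- For general n, the dimension of the space of S_n-invariants in Sym^{k_1}(V) ⊗ ... ⊗ Sym^{k_m}(V), where V is the n-dimensional permutation representation of S_n, equals the number of multiset partitions of {1^{k_1}, ..., m^{k_m}} into at most n parts. -/

import Mathlib

/-- The basis of `Sym^{k_1}(V) ⊗ ... ⊗ Sym^{k_m}(V)` for `V = ℂ^n`: an
`m`-tuple of monomials, the `j`-th being a monomial of total degree `k_j` in
`n` variables, recorded by its exponent vector. -/
def SymBasis (n m : ℕ) (k : Fin m → ℕ) : Type :=
  ∀ j : Fin m, {d : Fin n → ℕ // ∑ x, d x = k j}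

/-- The space of `S_n`-invariants in `Sym^{k_1}(V) ⊗ ... ⊗ Sym^{k_m}(V)`,
realized as functions on the monomial basis, where `σ ∈ S_n` acts diagonally by
permuting the variables in each exponent vector. -/
noncomputable def symInvariants (n m : ℕ) (k : Fin m → ℕ) :
    Submodule ℂ (SymBasis n m k → ℂ) where
  carrier := {v | ∀ σ : Equiv.Perm (Fin n), ∀ p q : SymBasis n m k,
    (∀ j, (q j).1 = (p j).1 ∘ σ) → v q = v p}
  add_mem' := by
    intro u v hu hv σ p q h
    simp only [Pi.add_apply, hu σ p q h, hv σ p q h]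
  zero_mem' := fun _ _ _ _ => rfl
  smul_mem' := by
    intro c v hv σ p q h
    simp only [Pi.smul_apply, hv σ p q h]

/-- The multiset `{1^{k_1}, 2^{k_2}, ..., m^{k_m}}` on `Fin m`. -/
def theMultiset (m : ℕ) (k : Fin m → ℕ) : Multiset (Fin m) :=
  ∑ j, Multiset.replicate (k j) j

/-!
Reading an exponent tuple `p : SymBasis n m k` column by column gives `n` multisets
`{j^{(p j) x}}` over `Fin m` whose sum is `{1^{k_1}, …, m^{k_m}}`, and `S_n` acts by permuting
the columns. Two tuples are therefore in the same orbit iff they have the same multiset of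
columns, and discarding the empty columns identifies these multisets with the multiset
partitions into at most `n` parts. The invariants are exactly the functions constant on orbits,
so their dimension is the number of orbits.
-/

open Function Multiset

namespace LinearMap

variable {R M X Y : Type*} {f : X → Y}

theorem mem_range_funLeft_iff [Semiring R] [AddCommMonoid M] [Module R M] (hf : Surjective f)
    {v : X → M} : v ∈ range (funLeft R M f) ↔ ∀ x y, f x = f y → v x = v y := by
  constructor
  · rintro ⟨w, rfl⟩ x y hxy
    simp only [funLeft_apply, hxy]
  · intro hv
    exact ⟨v ∘ surjInv hf, funext fun x => hv _ _ (surjInv_eq hf (f x))⟩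

theorem finrank_range_funLeft [Ring R] [StrongRankCondition R] [Finite Y] (hf : Surjective f) :
    Module.finrank R (range (funLeft R R f)) = Nat.card Y := by
  have := Fintype.ofFinite Y
  rw [finrank_range_of_inj (funLeft_injective_of_surjective _ _ f hf),
    Module.finrank_fintype_fun_eq_card, Nat.card_eq_fintype_card]

end LinearMap

namespace Multiset

variable {ι α : Type*}

theorem map_univ_eq_map_univ_iff [Fintype ι] {f g : ι → α} :
    Finset.univ.val.map f = Finset.univ.val.map g ↔ ∃ σ : Equiv.Perm ι, g = f ∘ σ := by
  classical
  constructor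
  · intro h
    have hfib : ∀ a, Fintype.card {x // g x = a} = Fintype.card {x // f x = a} := by
      intro a
      have hcount := congrArg (count a) h
      simp only [count_map, Fintype.card_subtype, eq_comm (a := a)] at hcount ⊢
      exact hcount.symm
    exact ⟨Equiv.ofFiberEquiv (fun a => Fintype.equivOfCardEq (hfib a)),
      funext fun x => (Equiv.ofFiberEquiv_map _ x).symm⟩
  · rintro ⟨σ, rfl⟩
    rw [← map_map, map_univ_val_equiv]

theorem exists_map_univ_eq [Fintype ι] {M : Multiset α} (hM : card M = Fintype.card ι) :
    ∃ f : ι → α, Finset.univ.val.map f = M := by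
  obtain ⟨l, rfl⟩ := Quot.exists_rep M
  let e := Fintype.equivFinOfCardEq (hM.symm.trans (coe_card l))
  refine ⟨l.get ∘ e, ?_⟩
  rw [← map_map, map_univ_val_equiv, Fin.univ_val_map, List.ofFn_get]
  rfl

theorem filter_ne_add_replicate_count [DecidableEq α] (M : Multiset α) (a : α) :
    M.filter (· ≠ a) + replicate (count a M) a = M := by
  rw [← filter_eq']
  simpa only [ne_eq, not_not] using M.filter_add_not (· ≠ a)

theorem sum_filter_ne_zero [AddCommMonoid α] [DecidableEq α] (M : Multiset α) :
    (M.filter (· ≠ 0)).sum = M.sum := by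
  conv_rhs => rw [← M.filter_ne_add_replicate_count 0]
  simp

def filterNeZeroEquiv [AddCommMonoid α] [DecidableEq α] (n : ℕ) (a : α) :
    {M : Multiset α // card M = n ∧ M.sum = a} ≃
      {P : Multiset α // (∀ p ∈ P, p ≠ 0) ∧ P.sum = a ∧ card P ≤ n} where
  toFun M := ⟨M.1.filter (· ≠ 0), fun _ hp => (mem_filter.1 hp).2,
    M.1.sum_filter_ne_zero.trans M.2.2, (card_le_card (filter_le _ _)).trans_eq M.2.1⟩
  invFun P := ⟨P.1 + replicate (n - card P.1) 0, by simp; omega, by simp [P.2.2.1]⟩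
  left_inv M := by
    have hcard := congrArg card (M.1.filter_ne_add_replicate_count 0)
    rw [card_add, card_replicate, M.2.1] at hcard
    ext1
    dsimp only
    conv_rhs => rw [← M.1.filter_ne_add_replicate_count 0]
    congr 2
    omega
  right_inv P := by
    ext1
    simp [filter_add, filter_eq_self.2 P.2.1,
      filter_eq_nil.2 fun _ h => not_not.2 (eq_of_mem_replicate h)]

noncomputable def countAddEquiv (α : Type*) [DecidableEq α] [Finite α] :
    Multiset α ≃+ (α → ℕ) :=
  toFinsupp.trans Finsupp.addEquivFunOnFinite

@[simp]
theorem countAddEquiv_apply [DecidableEq α] [Finite α] (s : Multiset α) (a : α) :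
    countAddEquiv α s a = count a s :=
  rfl

end Multiset

theorem countAddEquiv_theMultiset {m : ℕ} (k : Fin m → ℕ) :
    countAddEquiv (Fin m) (theMultiset m k) = k := by
  funext j
  simp [theMultiset, count_sum', count_replicate]

namespace SymBasis

variable {n m : ℕ} {k : Fin m → ℕ}

instance : Finite (SymBasis n m k) :=
  have (s : ℕ) : Finite {d : Fin n → ℕ // ∑ x, d x = s} :=
    ((Finset.Nat.antidiagonalTuple n s).finite_toSet.subset
      fun _ hd => Finset.Nat.mem_antidiagonalTuple.2 hd).to_subtype
  Pi.finite

noncomputable def columnsEquiv :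
    SymBasis n m k ≃ {c : Fin n → Multiset (Fin m) // ∑ x, c x = theMultiset m k} :=
  Equiv.subtypePiEquivPi.symm.trans <|
    ((Equiv.piComm fun (_ : Fin m) (_ : Fin n) => ℕ).trans
      (Equiv.piCongrRight fun _ => (countAddEquiv (Fin m)).symm.toEquiv)).subtypeEquiv fun d => by
        rw [← (countAddEquiv (Fin m)).symm_apply_apply (theMultiset m k),
          countAddEquiv_theMultiset]
        change _ ↔ ∑ x, (countAddEquiv (Fin m)).symm (fun j => d j x) = _
        rw [← map_sum, EmbeddingLike.apply_eq_iff_eq, funext_iff]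
        simp only [Finset.sum_apply]

theorem columnsEquiv_apply (p : SymBasis n m k) (x : Fin n) :
    (columnsEquiv p).1 x = (countAddEquiv (Fin m)).symm fun j => (p j).1 x :=
  rfl

theorem columnsEquiv_eq_comp_iff {p q : SymBasis n m k} {σ : Equiv.Perm (Fin n)} :
    (columnsEquiv q).1 = (columnsEquiv p).1 ∘ σ ↔ ∀ j, (q j).1 = (p j).1 ∘ σ := by
  simp only [funext_iff, comp_apply, columnsEquiv_apply, EmbeddingLike.apply_eq_iff_eq]
  exact forall_comm

noncomputable def multisetPartition (p : SymBasis n m k) :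
    {P : Multiset (Multiset (Fin m)) //
      (∀ s ∈ P, s ≠ 0) ∧ P.sum = theMultiset m k ∧ card P ≤ n} :=
  filterNeZeroEquiv n _ ⟨Finset.univ.val.map (columnsEquiv p).1, by simp, (columnsEquiv p).2⟩

theorem multisetPartition_surjective : Surjective (multisetPartition (n := n) (k := k)) := by
  intro P
  obtain ⟨⟨M, hcard, hsum⟩, rfl⟩ := (filterNeZeroEquiv n _).surjective P
  obtain ⟨c, rfl⟩ := exists_map_univ_eq (ι := Fin n) (hcard.trans (Fintype.card_fin n).symm)
  exact ⟨columnsEquiv.symm ⟨c, hsum⟩, by simp [multisetPartition]⟩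

theorem multisetPartition_eq_iff {p q : SymBasis n m k} :
    multisetPartition p = multisetPartition q ↔
      ∃ σ : Equiv.Perm (Fin n), ∀ j, (q j).1 = (p j).1 ∘ σ := by
  simp only [multisetPartition, (filterNeZeroEquiv _ _).injective.eq_iff, Subtype.mk.injEq,
    map_univ_eq_map_univ_iff, columnsEquiv_eq_comp_iff]

end SymBasis

open SymBasis in
theorem symInvariants_eq_range_funLeft {n m : ℕ} {k : Fin m → ℕ} :
    symInvariants n m k = LinearMap.range (LinearMap.funLeft ℂ ℂ multisetPartition) := by
  ext v
  rw [LinearMap.mem_range_funLeft_iff multisetPartition_surjective]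
  constructor
  · intro hv p q hpq
    obtain ⟨σ, hσ⟩ := multisetPartition_eq_iff.1 hpq
    exact (hv σ p q hσ).symm
  · intro hv σ p q hσ
    exact (hv p q (multisetPartition_eq_iff.2 ⟨σ, hσ⟩)).symm

/-- For general `n`, the dimension of the space of `S_n`-invariants in
`Sym^{k_1}(V) ⊗ ... ⊗ Sym^{k_m}(V)` equals the number of multiset partitions
of `{1^{k_1}, ..., m^{k_m}}` into at most `n` parts. -/
theorem stmt11 (n m : ℕ) (k : Fin m → ℕ) :
    Module.finrank ℂ (symInvariants n m k) =
      Nat.card {P : Multiset (Multiset (Fin m)) //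
        (∀ p ∈ P, p ≠ 0) ∧ P.sum = theMultiset m k ∧ Multiset.card P ≤ n} := by
  have hsurj := SymBasis.multisetPartition_surjective (n := n) (k := k)
  have := Finite.of_surjective _ hsurj
  rw [symInvariants_eq_range_funLeft, LinearMap.finrank_range_funLeft hsurj]
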